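/- arXiv:1902.08025 — 2 statements merged into one kernel-verified Lean document; each statement's English description precedes it below -/
import Mathlib

section
/- Let Q₊ be the closed convex hull of {e^{-2iφ} r - (ix)^{N+2} e^{(N+2)iφ} : r > 0, x ≥ 0} in ℂ. If φ ≠ -(N+2)π/(2N+8) + 2kπ/(N+4) for every integer k, then Q₊ ∪ Q₋ ≠ ℂ, where Q₋ = {conj(z) : z ∈ Q₊}. -/
open Real Complex

lemma re_ofReal_mul_exp (t A : ℝ) :
    ((t : ℂ) * Complex.exp ((A : ℂ) * Complex.I)).re = t * Real.cos A := by
  rw [Complex.re_ofReal_mul, Complex.exp_ofReal_mul_I_re]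

lemma key_re (N : ℕ) (φ θ' r x : ℝ) :
    (Complex.exp (-(θ' : ℂ) * Complex.I) *
      (Complex.exp (-(2 * (φ : ℂ) * Complex.I)) * (r : ℂ) -
        (Complex.I * (x : ℂ)) ^ (N + 2) *
          Complex.exp (((N : ℂ) + 2) * (φ : ℂ) * Complex.I))).re
    = r * Real.cos (2 * φ + θ') +
      x ^ (N + 2) * Real.cos (((N : ℝ) + 2) * φ + ((N : ℝ) + 4) * (π / 2) - θ') := by
  have hI : Complex.I ^ (N + 2) =
      Complex.exp (((((N : ℝ) + 2) * (π / 2) : ℝ) : ℂ) * Complex.I) := by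
    have h0 : Complex.exp (((π / 2 : ℝ) : ℂ) * Complex.I) = Complex.I := by
      simp [Complex.exp_mul_I]
    calc Complex.I ^ (N + 2) = Complex.exp (((π / 2 : ℝ) : ℂ) * Complex.I) ^ (N + 2) := by
          rw [h0]
      _ = Complex.exp (((N : ℂ) + 2) * (((π / 2 : ℝ) : ℂ) * Complex.I)) := by
          rw [show ((N : ℂ) + 2) = ((N + 2 : ℕ) : ℂ) by push_cast; ring, Complex.exp_nat_mul]
      _ = Complex.exp (((((N : ℝ) + 2) * (π / 2) : ℝ) : ℂ) * Complex.I) := by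
          congr 1; push_cast; ring
  have e1 : Complex.exp (-(θ' : ℂ) * Complex.I) *
      (Complex.exp (-(2 * (φ : ℂ) * Complex.I)) * (r : ℂ)) =
      (r : ℂ) * Complex.exp (((-(2 * φ + θ') : ℝ) : ℂ) * Complex.I) := by
    rw [show ((-(2 * φ + θ') : ℝ) : ℂ) * Complex.I =
        -(θ' : ℂ) * Complex.I + -(2 * (φ : ℂ) * Complex.I) by push_cast; ring,
      Complex.exp_add]; ring
  have e2 : Complex.exp (-(θ' : ℂ) * Complex.I) *
      ((Complex.I * (x : ℂ)) ^ (N + 2) * Complex.exp (((N : ℂ) + 2) * (φ : ℂ) * Complex.I)) =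
      ((x ^ (N + 2) : ℝ) : ℂ) *
        Complex.exp ((((((N : ℝ) + 2) * (π / 2) + ((N : ℝ) + 2) * φ - θ') : ℝ) : ℂ) * Complex.I) := by
    rw [mul_pow, hI, show ((x : ℂ)) ^ (N + 2) = ((x ^ (N + 2) : ℝ) : ℂ) by push_cast; ring,
      show (((((N : ℝ) + 2) * (π / 2) + ((N : ℝ) + 2) * φ - θ') : ℝ) : ℂ) * Complex.I =
        (-(θ' : ℂ) * Complex.I + ((((N : ℝ) + 2) * (π / 2) : ℝ) : ℂ) * Complex.I) +
          ((N : ℂ) + 2) * (φ : ℂ) * Complex.I by push_cast; ring,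
      Complex.exp_add, Complex.exp_add]; ring
  rw [mul_sub, e1, e2, Complex.sub_re, re_ofReal_mul_exp, re_ofReal_mul_exp]
  rw [Real.cos_neg, show ((N : ℝ) + 2) * φ + ((N : ℝ) + 4) * (π / 2) - θ' =
      (((N : ℝ) + 2) * (π / 2) + ((N : ℝ) + 2) * φ - θ') + π by ring, Real.cos_add_pi]
  ring

set_option maxHeartbeats 1000000 in
lemma exists_good_angle (N : ℕ) (φ : ℝ)
    (h : ∀ k : ℤ,
      φ ≠ -(((N : ℝ) + 2) * π) / (2 * (N : ℝ) + 8) + 2 * (k : ℝ) * π / ((N : ℝ) + 4)) :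
    ∃ θ' : ℝ, 0 ≤ Real.cos (2 * φ + θ') ∧
      0 ≤ Real.cos (((N : ℝ) + 2) * φ + ((N : ℝ) + 4) * (π / 2) - θ') ∧
      Real.cos θ' ≠ 0 := by
  have hN4 : ((N : ℝ) + 4) ≠ 0 := by positivity
  have hN8 : (2 * (N : ℝ) + 8) ≠ 0 := by positivity
  set ψ : ℝ := ((N : ℝ) + 4) * φ / 2 + ((N : ℝ) + 4) * π / 4 with hψdef
  set θ : ℝ := (N : ℝ) * φ / 2 + ((N : ℝ) + 4) * π / 4 with hθdef
  have hψ : Real.cos ψ ≠ 0 := by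
    intro h0
    rw [Real.cos_eq_zero_iff] at h0
    obtain ⟨k, hk⟩ := h0
    apply h k
    have hφeq : φ = ((2 * (k : ℝ) + 1) * π / 2 - ((N : ℝ) + 4) * π / 4) * 2 / ((N : ℝ) + 4) := by
      rw [hψdef] at hk
      field_simp at hk ⊢
      linarith
    rw [hφeq]
    field_simp
    ring
  -- choose base direction θ₁ with both cosines positive
  obtain ⟨θ₁, hp1, hp2⟩ : ∃ θ₁ : ℝ, 0 < Real.cos (2 * φ + θ₁) ∧
      0 < Real.cos (((N : ℝ) + 2) * φ + ((N : ℝ) + 4) * (π / 2) - θ₁) := by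
    have ha : 2 * φ + θ = ψ := by rw [hθdef, hψdef]; ring
    have hb : ((N : ℝ) + 2) * φ + ((N : ℝ) + 4) * (π / 2) - θ = ψ := by
      rw [hθdef, hψdef]; ring
    rcases hψ.lt_or_gt with hneg | hpos
    · refine ⟨θ + π, ?_, ?_⟩
      · rw [show 2 * φ + (θ + π) = (2 * φ + θ) + π by ring, ha, Real.cos_add_pi]; linarith
      · rw [show ((N : ℝ) + 2) * φ + ((N : ℝ) + 4) * (π / 2) - (θ + π)
            = (((N : ℝ) + 2) * φ + ((N : ℝ) + 4) * (π / 2) - θ + π) - 2 * π by ring,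
          Real.cos_sub_two_pi, hb, Real.cos_add_pi]
        linarith
    · exact ⟨θ, by rw [ha]; exact hpos, by rw [hb]; exact hpos⟩
  -- continuity: both stay positive for small perturbations
  have hF : Continuous fun δ : ℝ => Real.cos (2 * φ + θ₁ + δ) := by continuity
  have hG : Continuous fun δ : ℝ =>
      Real.cos (((N : ℝ) + 2) * φ + ((N : ℝ) + 4) * (π / 2) - θ₁ - δ) := by continuity
  have hev : ∀ᶠ δ in nhds (0 : ℝ), 0 < Real.cos (2 * φ + θ₁ + δ) ∧
      0 < Real.cos (((N : ℝ) + 2) * φ + ((N : ℝ) + 4) * (π / 2) - θ₁ - δ) := by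
    have h1 := (hF.tendsto 0).eventually (lt_mem_nhds
      (show (0:ℝ) < Real.cos (2 * φ + θ₁ + 0) by simpa using hp1))
    have h2 := (hG.tendsto 0).eventually (lt_mem_nhds
      (show (0:ℝ) < Real.cos (((N : ℝ) + 2) * φ + ((N : ℝ) + 4) * (π / 2) - θ₁ - 0) by
        simpa using hp2))
    exact h1.and h2
  rw [Metric.eventually_nhds_iff] at hev
  obtain ⟨ε, hε, hball⟩ := hev
  set d : ℝ := min ε π with hddef
  have hd : 0 < d := lt_min hε Real.pi_pos
  have hdε : d ≤ ε := min_le_left _ _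
  have hdπ : d ≤ π := min_le_right _ _
  have hgood : Real.cos (θ₁ + d / 2) ≠ 0 ∨ Real.cos (θ₁ + d / 4) ≠ 0 := by
    by_contra hcon
    push_neg at hcon
    obtain ⟨ha, hb⟩ := hcon
    rw [Real.cos_eq_zero_iff] at ha hb
    obtain ⟨k1, hk1⟩ := ha
    obtain ⟨k2, hk2⟩ := hb
    have hm : d / 4 = ((k1 - k2 : ℤ) : ℝ) * π := by push_cast; linarith
    have h1 : (0 : ℝ) < ((k1 - k2 : ℤ) : ℝ) := by
      by_contra hneg
      push_neg at hneg
      have := mul_le_mul_of_nonneg_right hneg Real.pi_pos.le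
      rw [zero_mul] at this
      linarith
    have h1' : (0 : ℤ) < k1 - k2 := by exact_mod_cast h1
    have h2 : (1 : ℝ) ≤ ((k1 - k2 : ℤ) : ℝ) := by exact_mod_cast h1'
    have h3 := mul_le_mul_of_nonneg_right h2 Real.pi_pos.le
    rw [one_mul] at h3
    linarith
  have hdist : ∀ t : ℝ, 0 < t → t ≤ d / 2 → dist t 0 < ε := by
    intro t ht htd
    rw [Real.dist_eq, sub_zero, abs_of_pos ht]
    linarith
  rcases hgood with hg | hg
  · obtain ⟨hb1, hb2⟩ := hball (hdist (d / 2) (by linarith) le_rfl)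
    refine ⟨θ₁ + d / 2, ?_, ?_, hg⟩
    · rw [show 2 * φ + (θ₁ + d / 2) = 2 * φ + θ₁ + d / 2 by ring]; exact hb1.le
    · rw [show ((N : ℝ) + 2) * φ + ((N : ℝ) + 4) * (π / 2) - (θ₁ + d / 2)
          = ((N : ℝ) + 2) * φ + ((N : ℝ) + 4) * (π / 2) - θ₁ - d / 2 by ring]; exact hb2.le
  · obtain ⟨hb1, hb2⟩ := hball (hdist (d / 4) (by linarith) (by linarith))
    refine ⟨θ₁ + d / 4, ?_, ?_, hg⟩
    · rw [show 2 * φ + (θ₁ + d / 4) = 2 * φ + θ₁ + d / 4 by ring]; exact hb1.le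
    · rw [show ((N : ℝ) + 2) * φ + ((N : ℝ) + 4) * (π / 2) - (θ₁ + d / 4)
          = ((N : ℝ) + 2) * φ + ((N : ℝ) + 4) * (π / 2) - θ₁ - d / 4 by ring]; exact hb2.le

theorem sectors_do_not_cover_plane (N : ℕ) (hN : 1 ≤ N) (φ : ℝ)
    (hφ : φ ∈ Set.Ioo (-(π / 2)) (π / 2))
    (h : ∀ k : ℤ,
      φ ≠ -(((N : ℝ) + 2) * π) / (2 * (N : ℝ) + 8) + 2 * (k : ℝ) * π / ((N : ℝ) + 4)) :
    closure (convexHull ℝ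
        {z : ℂ | ∃ r : ℝ, 0 < r ∧ ∃ x : ℝ, 0 ≤ x ∧
          z = Complex.exp (-(2 * (φ : ℂ) * Complex.I)) * (r : ℂ) -
              (Complex.I * (x : ℂ)) ^ (N + 2) *
                Complex.exp (((N : ℂ) + 2) * (φ : ℂ) * Complex.I)}) ∪
      (starRingEnd ℂ '' closure (convexHull ℝ
        {z : ℂ | ∃ r : ℝ, 0 < r ∧ ∃ x : ℝ, 0 ≤ x ∧
          z = Complex.exp (-(2 * (φ : ℂ) * Complex.I)) * (r : ℂ) -
              (Complex.I * (x : ℂ)) ^ (N + 2) *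
                Complex.exp (((N : ℂ) + 2) * (φ : ℂ) * Complex.I)})) ≠ Set.univ := by
  obtain ⟨θ', hc1, hc2, hc3⟩ := exists_good_angle N φ h
  set S : Set ℂ := {z : ℂ | ∃ r : ℝ, 0 < r ∧ ∃ x : ℝ, 0 ≤ x ∧
      z = Complex.exp (-(2 * (φ : ℂ) * Complex.I)) * (r : ℂ) -
          (Complex.I * (x : ℂ)) ^ (N + 2) *
            Complex.exp (((N : ℂ) + 2) * (φ : ℂ) * Complex.I)} with hSdef
  set c : ℂ := Complex.exp (-(θ' : ℂ) * Complex.I) with hcdef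
  have hlin : IsLinearMap ℝ (fun z : ℂ => (c * z).re) := by
    constructor
    · intro a b; simp [mul_add]
    · intro t a
      simp only [smul_eq_mul, Complex.real_smul]
      rw [mul_left_comm, Complex.re_ofReal_mul]
  have hHconv : Convex ℝ {z : ℂ | 0 ≤ (c * z).re} := convex_halfSpace_ge hlin 0
  have hHclosed : IsClosed {z : ℂ | 0 ≤ (c * z).re} := by
    apply isClosed_le continuous_const
    exact Complex.continuous_re.comp (continuous_const.mul continuous_id)
  have hSsub : S ⊆ {z : ℂ | 0 ≤ (c * z).re} := by
    rintro z ⟨r, hr, x, hx, rfl⟩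
    show (0 : ℝ) ≤ _
    rw [hcdef, key_re]
    exact add_nonneg (mul_nonneg hr.le hc1) (mul_nonneg (pow_nonneg hx _) hc2)
  have hsub : closure (convexHull ℝ S) ⊆ {z : ℂ | 0 ≤ (c * z).re} :=
    closure_minimal (convexHull_min hSsub hHconv) hHclosed
  rw [Set.ne_univ_iff_exists_notMem]
  refine ⟨((-2 * Real.cos θ' : ℝ) : ℂ), ?_⟩
  have hcw : (c * ((-2 * Real.cos θ' : ℝ) : ℂ)).re < 0 := by
    have hcr : (c * ((-2 * Real.cos θ' : ℝ) : ℂ)).re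
        = -2 * Real.cos θ' * Real.cos θ' := by
      rw [mul_comm, Complex.re_ofReal_mul, hcdef,
        show -(θ' : ℂ) * Complex.I = (((-θ' : ℝ) : ℂ)) * Complex.I by push_cast; ring,
        Complex.exp_ofReal_mul_I_re, Real.cos_neg]
    rw [hcr]
    have := mul_self_pos.mpr hc3
    nlinarith
  intro hmem
  rcases hmem with hmem | ⟨z, hzT, hzw⟩
  · exact absurd (hsub hmem) (by simpa using not_le.mpr hcw)
  · have hz : z = ((-2 * Real.cos θ' : ℝ) : ℂ) := by
      have h' := congrArg (starRingEnd ℂ) hzw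
      rw [Complex.conj_conj, Complex.conj_ofReal] at h'
      exact h'
    rw [hz] at hzT
    exact absurd (hsub hzT) (by simpa using not_le.mpr hcw)
end

section
/- Let u : [0,∞) → ℂ be smooth with compact support, u(0) = u'(0) = 0, and ||u||_{L²} = 1. Let λ ∈ ℂ, η ∈ ℝ and K ∈ ℂ be such that Re(e^{iη}(e^{-2iφ} r - (ix)^{N+2} e^{(N+2)iφ} - K)) ≥ 0 for all r > 0 and x ≥ 0, and let δ = Re(e^{iη}(K - λ)) > 0. Then ||(A'u) - λu||_{L²} ≥ δ, where (A'u)(x) = -e^{-2iφ} u''(x) - (ix)^{N+2} e^{(N+2)iφ} u(x). -/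
open Real Complex MeasureTheory Set



private lemma aux_lin {a b : ℝ} (h : ∀ r : ℝ, 0 < r → 0 ≤ a * r + b) :
    0 ≤ a ∧ 0 ≤ b := by
  constructor
  · by_contra ha
    push_neg at ha
    have hpos : 0 < (|b| + 1) / (-a) := by
      apply div_pos (by positivity) (by linarith)
    have h1 := h _ hpos
    have h2 : a * ((|b| + 1) / (-a)) = -(|b| + 1) := by
      rw [mul_div_assoc', mul_comm, mul_div_assoc, div_neg, div_self (by linarith : a ≠ 0)]
      ring
    nlinarith [le_abs_self b]
  · by_contra hb
    push_neg at hb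
    rcases le_or_gt a 0 with ha | ha
    · nlinarith [h 1 one_pos]
    · have hpos : 0 < -b / (2 * a) := by
        apply div_pos (by linarith) (by linarith)
      have h1 := h _ hpos
      have h2 : a * (-b / (2 * a)) = -b / 2 := by
        field_simp
      nlinarith

private lemma aux_young {δ M : ℝ} (hδ : 0 < δ) (hM : 0 ≤ M)
    (h : ∀ t : ℝ, 0 < t → δ ≤ t / 2 * M + 1 / (2 * t)) : δ ≤ Real.sqrt M := by
  rcases eq_or_lt_of_le hM with hM0 | hM0
  · have h1 := h (1 / δ) (by positivity)
    rw [← hM0] at h1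
    have : 1 / (2 * (1 / δ)) = δ / 2 := by field_simp
    nlinarith
  · have hs : 0 < Real.sqrt M := Real.sqrt_pos.mpr hM0
    have h2 : Real.sqrt M * Real.sqrt M = M := Real.mul_self_sqrt hM
    have h1 := h (1 / Real.sqrt M) (by positivity)
    have e1 : (1 / Real.sqrt M) / 2 * M = Real.sqrt M / 2 := by
      field_simp
      nlinarith
    have e2 : 1 / (2 * (1 / Real.sqrt M)) = Real.sqrt M / 2 := by
      field_simp
    nlinarith

private lemma aux_ibp {u : ℝ → ℂ} (hu : ContDiff ℝ (⊤ : ℕ∞) u) {R : ℝ} (hR : 0 < R)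
    (hu0 : u 0 = 0) (huR : deriv u R = 0) :
    ∫ x in (0:ℝ)..R, iteratedDeriv 2 u x * (starRingEnd ℂ) (u x)
      = - ∫ x in (0:ℝ)..R, deriv u x * (starRingEnd ℂ) (deriv u x) := by
  have hu' : ContDiff ℝ (⊤ : ℕ∞) u := hu.of_le (by simp)
  have hd1 : ContDiff ℝ (⊤ : ℕ∞) (deriv u) := (contDiff_infty_iff_deriv.mp hu').2
  have hd2 : ContDiff ℝ (⊤ : ℕ∞) (deriv (deriv u)) := (contDiff_infty_iff_deriv.mp hd1).2
  have hdiff1 : Differentiable ℝ u := hu'.differentiable (by norm_num)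
  have hdiff2 : Differentiable ℝ (deriv u) := hd1.differentiable (by norm_num)
  have hit : iteratedDeriv 2 u = deriv (deriv u) := by
    rw [iteratedDeriv_succ, iteratedDeriv_one]
  have key := intervalIntegral.integral_deriv_mul_eq_sub_of_hasDerivAt
    (u := deriv u) (v := fun x => (starRingEnd ℂ) (u x))
    (u' := deriv (deriv u)) (v' := fun x => (starRingEnd ℂ) (deriv u x))
    (a := 0) (b := R)
    (hd1.continuous.continuousOn)
    ((Complex.continuous_conj.comp hu'.continuous).continuousOn)
    (fun x _ => (hdiff2 x).hasDerivAt)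
    (fun x _ => ((hdiff1 x).hasDerivAt).star)
    (hd2.continuous.intervalIntegrable _ _)
    ((Complex.continuous_conj.comp hd1.continuous).intervalIntegrable _ _)
  simp only [huR, hu0, map_zero, zero_mul, mul_zero, sub_zero] at key
  have hsplit : ∫ x in (0:ℝ)..R,
      (deriv (deriv u) x * (starRingEnd ℂ) (u x) + deriv u x * (starRingEnd ℂ) (deriv u x))
      = (∫ x in (0:ℝ)..R, deriv (deriv u) x * (starRingEnd ℂ) (u x))
        + ∫ x in (0:ℝ)..R, deriv u x * (starRingEnd ℂ) (deriv u x) := by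
    apply intervalIntegral.integral_add
    · exact ((hd2.continuous.mul (Complex.continuous_conj.comp hu'.continuous))).intervalIntegrable _ _
    · exact ((hd1.continuous.mul (Complex.continuous_conj.comp hd1.continuous))).intervalIntegrable _ _
  rw [hit]
  rw [hsplit] at key
  linear_combination key


private lemma aux_Ioi_eq {g : ℝ → ℂ} (hg : IntegrableOn g (Ioi 0)) {R : ℝ} (hR0 : 0 < R)
    (hgR : ∀ x, R ≤ x → g x = 0) :
    ∫ x in Ioi (0:ℝ), g x = ∫ x in (0:ℝ)..R, g x := by
  rw [intervalIntegral.integral_of_le hR0.le, ← Ioc_union_Ioi_eq_Ioi hR0.le,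
    setIntegral_union (Ioc_disjoint_Ioi le_rfl) measurableSet_Ioi
      (hg.mono_set Ioc_subset_Ioi_self) (hg.mono_set (Ioi_subset_Ioi hR0.le))]
  have hz : ∫ x in Ioi R, g x = 0 := by
    rw [setIntegral_congr_fun measurableSet_Ioi (fun x hx => hgR x (le_of_lt hx))]
    simp
  rw [hz, add_zero]

theorem preminimal_operator_lower_bound (N : ℕ) (hN : 1 ≤ N) (φ : ℝ)
    (hφ : φ ∈ Set.Ioo (-(π / 2)) (π / 2))
    (u : ℝ → ℂ) (hu : ContDiff ℝ (⊤ : ℕ∞) u) (hsupp : HasCompactSupport u)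
    (hu0 : u 0 = 0) (hu'0 : deriv u 0 = 0)
    (hnorm : ∫ x in Set.Ioi (0 : ℝ), ‖u x‖ ^ 2 = 1)
    (lam K : ℂ) (η δ : ℝ)
    (hK : ∀ r : ℝ, 0 < r → ∀ x : ℝ, 0 ≤ x →
      0 ≤ (Complex.exp ((η : ℂ) * Complex.I) *
            (Complex.exp (-(2 * (φ : ℂ) * Complex.I)) * (r : ℂ) -
              (Complex.I * (x : ℂ)) ^ (N + 2) *
                Complex.exp (((N : ℂ) + 2) * (φ : ℂ) * Complex.I) - K)).re)
    (hδ : δ = (Complex.exp ((η : ℂ) * Complex.I) * (K - lam)).re) (hδpos : 0 < δ) :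
    δ ≤ Real.sqrt (∫ x in Set.Ioi (0 : ℝ),
      ‖(-Complex.exp (-(2 * (φ : ℂ) * Complex.I)) * iteratedDeriv 2 u x -
          (Complex.I * (x : ℂ)) ^ (N + 2) *
            Complex.exp (((N : ℂ) + 2) * (φ : ℂ) * Complex.I) * u x) - lam * u x‖ ^ 2) := by
  -- smoothness facts
  have hu' : ContDiff ℝ (⊤ : ℕ∞) u := hu.of_le (by simp)
  have hd1 : ContDiff ℝ (⊤ : ℕ∞) (deriv u) := (contDiff_infty_iff_deriv.mp hu').2
  have hd2 : ContDiff ℝ (⊤ : ℕ∞) (deriv (deriv u)) := (contDiff_infty_iff_deriv.mp hd1).2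
  have hit : iteratedDeriv 2 u = deriv (deriv u) := by
    rw [iteratedDeriv_succ, iteratedDeriv_one]
  have hcu : Continuous u := hu'.continuous
  have hcu1 : Continuous (deriv u) := hd1.continuous
  have hcu2 : Continuous (iteratedDeriv 2 u) := hit ▸ hd2.continuous
  -- notation
  set c2 : ℂ := Complex.exp (-(2 * (φ : ℂ) * Complex.I)) with hc2def
  set ee : ℂ := Complex.exp ((η : ℂ) * Complex.I) with heedef
  set V : ℝ → ℂ := fun x => (Complex.I * (x : ℂ)) ^ (N + 2) *
      Complex.exp (((N : ℂ) + 2) * (φ : ℂ) * Complex.I) with hVdef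
  set F : ℝ → ℂ := fun x => -c2 * iteratedDeriv 2 u x - V x * u x - lam * u x with hFdef
  suffices hgoal : δ ≤ Real.sqrt (∫ x in Set.Ioi (0:ℝ), ‖F x‖ ^ 2) by exact hgoal
  have hVc : Continuous V := by
    apply Continuous.mul _ continuous_const
    exact (continuous_const.mul Complex.continuous_ofReal).pow _
  have hFc : Continuous F := by
    rw [hFdef]
    exact ((continuous_const.mul hcu2).sub (hVc.mul hcu)).sub (continuous_const.mul hcu)
  -- support facts
  have hts1 : tsupport (deriv u) ⊆ tsupport u :=
    closure_minimal (support_deriv_subset) (isClosed_tsupport u)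
  have hz0 : ∀ x, x ∉ tsupport u → u x = 0 := fun x hx => image_eq_zero_of_notMem_tsupport hx
  have hz1 : ∀ x, x ∉ tsupport u → deriv u x = 0 := fun x hx =>
    image_eq_zero_of_notMem_tsupport (fun h => hx (hts1 h))
  have hz2 : ∀ x, x ∉ tsupport u → iteratedDeriv 2 u x = 0 := by
    intro x hx
    rw [hit]
    exact image_eq_zero_of_notMem_tsupport
      (fun h => hx (hts1 ((closure_minimal (support_deriv_subset) (isClosed_tsupport _)) h)))
  have hzF : ∀ x, x ∉ tsupport u → F x = 0 := by
    intro x hx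
    rw [hFdef]
    simp only [hz0 x hx, hz2 x hx, mul_zero, sub_zero, zero_sub, neg_zero, add_zero, sub_self]
  -- choice of R
  obtain ⟨C, hC⟩ := hsupp.isCompact.bddAbove
  set R : ℝ := max C 0 + 1 with hRdef
  have hRpos : 0 < R := by
    have : (0:ℝ) ≤ max C 0 := le_max_right _ _
    linarith
  have hout : ∀ x, R ≤ x → x ∉ tsupport u := by
    intro x hx hmem
    have h1 := hC hmem
    have h2 : C ≤ max C 0 := le_max_left _ _
    linarith
  -- integrability helpers
  have hCSc : ∀ g : ℝ → ℂ, Continuous g → (∀ x, x ∉ tsupport u → g x = 0) →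
      IntegrableOn g (Ioi 0) := fun g hgc hg =>
    ((hgc.integrable_of_hasCompactSupport (HasCompactSupport.intro hsupp hg)).integrableOn)
  have hCSr : ∀ g : ℝ → ℝ, Continuous g → (∀ x, x ∉ tsupport u → g x = 0) →
      IntegrableOn g (Ioi 0) := fun g hgc hg =>
    ((hgc.integrable_of_hasCompactSupport (HasCompactSupport.intro hsupp hg)).integrableOn)
  have hconj : Continuous fun x => (starRingEnd ℂ) (u x) := Complex.continuous_conj.comp hcu
  have hofReal : ∀ g : ℝ → ℝ,
      (∫ x in Ioi (0:ℝ), ((g x : ℝ) : ℂ)) = ((∫ x in Ioi (0:ℝ), g x : ℝ) : ℂ) := fun g => by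
    exact integral_ofReal
  have hre : ∀ g : ℝ → ℂ, IntegrableOn g (Ioi 0) →
      (∫ x in Ioi (0:ℝ), g x).re = ∫ x in Ioi (0:ℝ), (g x).re := fun g hg => by
    exact (integral_re hg).symm
  have hmc : ∀ z : ℂ, z * (starRingEnd ℂ) z = ((‖z‖ ^ 2 : ℝ) : ℂ) := by
    intro z
    rw [Complex.mul_conj, Complex.normSq_eq_norm_sq]
  -- individual integrabilities
  have hI2 : IntegrableOn (fun x => iteratedDeriv 2 u x * (starRingEnd ℂ) (u x)) (Ioi 0) :=
    hCSc _ (hcu2.mul hconj) (fun x hx => by rw [hz2 x hx, zero_mul])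
  have hIVu : IntegrableOn (fun x => V x * ((‖u x‖ ^ 2 : ℝ) : ℂ)) (Ioi 0) :=
    hCSc _ (hVc.mul (Complex.continuous_ofReal.comp ((hcu.norm).pow 2)))
      (fun x hx => by rw [hz0 x hx]; simp)
  have hIuu : IntegrableOn (fun x => ((‖u x‖ ^ 2 : ℝ) : ℂ)) (Ioi 0) :=
    hCSc _ (Complex.continuous_ofReal.comp ((hcu.norm).pow 2))
      (fun x hx => by rw [hz0 x hx]; simp)
  have hIu'u' : IntegrableOn (fun x => deriv u x * (starRingEnd ℂ) (deriv u x)) (Ioi 0) :=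
    hCSc _ (hcu1.mul (Complex.continuous_conj.comp hcu1))
      (fun x hx => by rw [hz1 x hx, zero_mul])
  have hInu2 : IntegrableOn (fun x => ‖u x‖ ^ 2) (Ioi 0) :=
    hCSr _ ((hcu.norm).pow 2) (fun x hx => by rw [hz0 x hx]; simp)
  have hInu'2 : IntegrableOn (fun x => ‖deriv u x‖ ^ 2) (Ioi 0) :=
    hCSr _ ((hcu1.norm).pow 2) (fun x hx => by rw [hz1 x hx]; simp)
  have hInF2 : IntegrableOn (fun x => ‖F x‖ ^ 2) (Ioi 0) :=
    hCSr _ ((hFc.norm).pow 2) (fun x hx => by rw [hzF x hx]; simp)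
  have hInFu : IntegrableOn (fun x => ‖F x‖ * ‖u x‖) (Ioi 0) :=
    hCSr _ ((hFc.norm).mul (hcu.norm)) (fun x hx => by rw [hzF x hx]; simp)
  have hIb : IntegrableOn (fun x => (ee * V x).re * ‖u x‖ ^ 2) (Ioi 0) :=
    hCSr _ ((Complex.continuous_re.comp (continuous_const.mul hVc)).mul ((hcu.norm).pow 2))
      (fun x hx => by rw [hz0 x hx]; simp)
  have hIFu : IntegrableOn (fun x => F x * (starRingEnd ℂ) (u x)) (Ioi 0) :=
    hCSc _ (hFc.mul hconj) (fun x hx => by rw [hzF x hx, zero_mul])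
  -- quantities
  set W : ℝ := ∫ x in Ioi (0:ℝ), ‖deriv u x‖ ^ 2 with hWdef
  set M : ℝ := ∫ x in Ioi (0:ℝ), ‖F x‖ ^ 2 with hMdef
  set T : ℂ := ∫ x in Ioi (0:ℝ), V x * ((‖u x‖ ^ 2 : ℝ) : ℂ) with hTdef
  set J : ℂ := ∫ x in Ioi (0:ℝ), F x * (starRingEnd ℂ) (u x) with hJdef
  have hWnn : 0 ≤ W := setIntegral_nonneg measurableSet_Ioi (fun x _ => by positivity)
  have hMnn : 0 ≤ M := setIntegral_nonneg measurableSet_Ioi (fun x _ => by positivity)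
  -- step 1 : value of the u''-integral via integration by parts
  have hu''int : ∫ x in Ioi (0:ℝ), iteratedDeriv 2 u x * (starRingEnd ℂ) (u x) = -(W : ℂ) := by
    rw [aux_Ioi_eq hI2 hRpos (fun x hx => by rw [hz2 x (hout x hx), zero_mul])]
    rw [aux_ibp hu hRpos hu0 (hz1 R (hout R le_rfl))]
    rw [← aux_Ioi_eq hIu'u' hRpos (fun x hx => by rw [hz1 x (hout x hx), zero_mul])]
    have : ∫ x in Ioi (0:ℝ), deriv u x * (starRingEnd ℂ) (deriv u x)
        = ∫ x in Ioi (0:ℝ), ((‖deriv u x‖ ^ 2 : ℝ) : ℂ) := by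
      refine setIntegral_congr_fun measurableSet_Ioi (fun x _ => hmc _)
    rw [this, hofReal, hWdef]
  have hLuu : ∫ x in Ioi (0:ℝ), ((‖u x‖ ^ 2 : ℝ) : ℂ) = 1 := by
    rw [hofReal, hnorm]
    norm_num
  -- step 2 : J = c2 * W - T - lam
  have hJval : J = c2 * (W : ℂ) - T - lam := by
    rw [hJdef]
    have hdec : ∀ x : ℝ, F x * (starRingEnd ℂ) (u x)
        = -c2 * (iteratedDeriv 2 u x * (starRingEnd ℂ) (u x))
          - V x * (u x * (starRingEnd ℂ) (u x)) - lam * (u x * (starRingEnd ℂ) (u x)) := by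
      intro x
      rw [hFdef]
      ring
    have hrec : ∀ x : ℝ, x ∈ Ioi (0:ℝ) → F x * (starRingEnd ℂ) (u x)
        = -c2 * (iteratedDeriv 2 u x * (starRingEnd ℂ) (u x))
          - V x * ((‖u x‖ ^ 2 : ℝ) : ℂ) - lam * ((‖u x‖ ^ 2 : ℝ) : ℂ) := by
      intro x _
      rw [hdec x, hmc (u x)]
    rw [setIntegral_congr_fun measurableSet_Ioi hrec]
    have hIA : Integrable (fun x => -c2 * (iteratedDeriv 2 u x * (starRingEnd ℂ) (u x))
        - V x * ((‖u x‖ ^ 2 : ℝ) : ℂ)) (volume.restrict (Ioi 0)) := (hI2.const_mul _).sub hIVu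
    have hIB : Integrable (fun x => lam * ((‖u x‖ ^ 2 : ℝ) : ℂ))
        (volume.restrict (Ioi 0)) := hIuu.const_mul _
    have hIC : Integrable (fun x => -c2 * (iteratedDeriv 2 u x * (starRingEnd ℂ) (u x)))
        (volume.restrict (Ioi 0)) := hI2.const_mul _
    rw [integral_sub hIA hIB, integral_sub hIC hIVu, integral_const_mul, integral_const_mul,
      hu''int, hLuu, hTdef]
    ring
  -- step 3 : positivity from the hypothesis hK
  have hsign : ∀ x : ℝ, 0 ≤ x → 0 ≤ (ee * c2).re ∧ 0 ≤ (-(ee * V x) - ee * K).re := by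
    intro x hx
    apply aux_lin
    intro r hr
    have h1 := hK r hr x hx
    have h2 : ee * (c2 * (r:ℂ) - V x - K) = (r : ℂ) * (ee * c2) + (-(ee * V x) - ee * K) := by
      ring
    rw [h2] at h1
    rw [Complex.add_re, Complex.re_ofReal_mul] at h1
    linarith [h1]
  have ha : 0 ≤ (ee * c2).re := (hsign 0 le_rfl).1
  -- step 4 : real part of ee * J
  have hReT : (ee * T).re = ∫ x in Ioi (0:ℝ), (ee * V x).re * ‖u x‖ ^ 2 := by
    have h1 : ee * T = ∫ x in Ioi (0:ℝ), ee * (V x * ((‖u x‖ ^ 2 : ℝ) : ℂ)) :=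
      (integral_const_mul _ _).symm
    rw [h1, hre _ (hIVu.const_mul ee)]
    refine setIntegral_congr_fun measurableSet_Ioi (fun x _ => ?_)
    have h2 : ee * (V x * ((‖u x‖ ^ 2 : ℝ) : ℂ)) = ((‖u x‖ ^ 2 : ℝ) : ℂ) * (ee * V x) := by ring
    rw [h2, Complex.re_ofReal_mul]
    ring
  have hReJ : (ee * J).re = (ee * c2).re * W - (∫ x in Ioi (0:ℝ), (ee * V x).re * ‖u x‖ ^ 2)
      - (ee * lam).re := by
    rw [hJval]
    have : ee * (c2 * (W:ℂ) - T - lam) = (W:ℂ) * (ee * c2) - ee * T - ee * lam := by ring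
    rw [this, Complex.sub_re, Complex.sub_re, Complex.re_ofReal_mul, hReT]
    ring
  -- step 5 : lower bound for the real part
  have hbnd : ∫ x in Ioi (0:ℝ), (ee * V x).re * ‖u x‖ ^ 2 ≤ -(ee * K).re := by
    have hptw : ∀ x ∈ Ioi (0:ℝ), (ee * V x).re * ‖u x‖ ^ 2 ≤ (-(ee * K).re) * ‖u x‖ ^ 2 := by
      intro x hx
      have h2 := (hsign x (le_of_lt hx)).2
      have h3 : (ee * V x).re ≤ -(ee * K).re := by
        rw [Complex.sub_re, Complex.neg_re] at h2
        linarith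
      exact mul_le_mul_of_nonneg_right h3 (by positivity)
    calc ∫ x in Ioi (0:ℝ), (ee * V x).re * ‖u x‖ ^ 2
        ≤ ∫ x in Ioi (0:ℝ), (-(ee * K).re) * ‖u x‖ ^ 2 :=
          setIntegral_mono_on hIb (hInu2.const_mul _) measurableSet_Ioi hptw
      _ = -(ee * K).re := by rw [integral_const_mul, hnorm, mul_one]
  have hδle : δ ≤ (ee * J).re := by
    have hδeq : δ = (ee * K).re - (ee * lam).re := by
      rw [hδ, heedef]
      simp [mul_sub, Complex.sub_re]
    rw [hReJ, hδeq]
    nlinarith [mul_nonneg ha hWnn]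
  -- step 6 : |J| and the Young-type bound
  have habs : ∀ t : ℝ, 0 < t → δ ≤ t / 2 * M + 1 / (2 * t) := by
    intro t ht
    have h1 : δ ≤ ‖ee * J‖ := le_trans hδle (Complex.re_le_norm _)
    have h2 : ‖ee * J‖ = ‖J‖ := by
      rw [norm_mul, heedef]
      rw [Complex.norm_exp]
      simp
    have h3 : ‖J‖ ≤ ∫ x in Ioi (0:ℝ), ‖F x * (starRingEnd ℂ) (u x)‖ :=
      norm_integral_le_integral_norm _
    have h4 : ∫ x in Ioi (0:ℝ), ‖F x * (starRingEnd ℂ) (u x)‖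
        = ∫ x in Ioi (0:ℝ), ‖F x‖ * ‖u x‖ := by
      refine setIntegral_congr_fun measurableSet_Ioi (fun x _ => ?_)
      rw [norm_mul, RCLike.norm_conj]
    have h5 : ∫ x in Ioi (0:ℝ), ‖F x‖ * ‖u x‖
        ≤ ∫ x in Ioi (0:ℝ), (t / 2 * ‖F x‖ ^ 2 + 1 / (2 * t) * ‖u x‖ ^ 2) := by
      refine setIntegral_mono_on hInFu ((hInF2.const_mul _).add (hInu2.const_mul _))
        measurableSet_Ioi (fun x _ => ?_)
      have key : 0 ≤ (t * ‖F x‖ - ‖u x‖) ^ 2 := sq_nonneg _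
      have ht' : 0 < 2 * t := by linarith
      rw [← sub_nonneg]
      have expand : t / 2 * ‖F x‖ ^ 2 + 1 / (2 * t) * ‖u x‖ ^ 2 - ‖F x‖ * ‖u x‖
          = (t * ‖F x‖ - ‖u x‖) ^ 2 / (2 * t) := by
        field_simp
        ring
      rw [expand]
      positivity
    have h6 : ∫ x in Ioi (0:ℝ), (t / 2 * ‖F x‖ ^ 2 + 1 / (2 * t) * ‖u x‖ ^ 2)
        = t / 2 * M + 1 / (2 * t) := by
      rw [integral_add (hInF2.const_mul _) (hInu2.const_mul _), integral_const_mul,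
        integral_const_mul, hnorm, hMdef, mul_one]
    linarith
  exact aux_young hδpos hMnn habs
end
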